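/- arXiv:2512.24012 — 2 statements merged into one kernel-verified Lean document; each statement's English description precedes it below -/
import Mathlib

section
/- Let p be an odd prime and let τ_p : S_p → S_p be the map sending k to the unique k̃ ∈ S_p with k·k̃ ≡ ±1 (mod p). Then τ_p is a permutation of S_p and its sign equals −(2/p), where (2/p) is the Legendre symbol. -/
/-- `Sset n` is the set `S_n = {a ∈ ℕ : 1 ≤ a < n/2, gcd(a,n) = 1}`. -/
def Sset (n : ℕ) : Finset ℕ :=
  (Finset.range n).filter fun a => 1 ≤ a ∧ 2 * a < n ∧ Nat.Coprime a n

lemma mem_Sset {n a : ℕ} : a ∈ Sset n ↔ 1 ≤ a ∧ 2 * a < n ∧ Nat.Coprime a n := by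
  simp only [Sset, Finset.mem_filter, Finset.mem_range]
  constructor
  · tauto
  · rintro ⟨h1, h2, h3⟩; exact ⟨by omega, h1, h2, h3⟩

lemma Sset_eq_Ico (p : ℕ) [hp : Fact p.Prime] : Sset p = Finset.Ico 1 ((p+1)/2) := by
  ext a
  simp only [mem_Sset, Finset.mem_Ico]
  constructor
  · rintro ⟨h1, h2, _⟩; omega
  · rintro ⟨h1, h2⟩
    refine ⟨h1, by omega, (Nat.coprime_comm.mp ?_)⟩
    exact (Nat.Prime.coprime_iff_not_dvd hp.out).mpr (fun hd => by
      have := Nat.le_of_dvd (by omega) hd; omega)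

lemma card_Sset (p : ℕ) [hp : Fact p.Prime] : (Sset p).card = (p-1)/2 := by
  rw [Sset_eq_Ico]
  simp [Nat.card_Ico]
  omega

section casts
variable {p : ℕ} [hp : Fact p.Prime]

lemma Sset_cast_ne_zero {a : ℕ} (ha : a ∈ Sset p) : (a : ZMod p) ≠ 0 := by
  rw [Ne, ZMod.natCast_eq_zero_iff]
  rw [mem_Sset] at ha
  exact fun hd => by have := Nat.le_of_dvd (by omega) hd; omega

lemma Sset_cast_inj {a b : ℕ} (ha : a ∈ Sset p) (hb : b ∈ Sset p)
    (h : (a : ZMod p) = (b : ZMod p)) : a = b := by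
  rw [mem_Sset] at ha hb
  have := (ZMod.natCast_eq_natCast_iff' a b p).mp h
  rw [Nat.mod_eq_of_lt (by omega), Nat.mod_eq_of_lt (by omega)] at this
  exact this

lemma Sset_cast_ne_neg {a b : ℕ} (ha : a ∈ Sset p) (hb : b ∈ Sset p)
    (h : (a : ZMod p) = -(b : ZMod p)) : False := by
  rw [mem_Sset] at ha hb
  have h0 : ((a + b : ℕ) : ZMod p) = 0 := by push_cast; rw [h]; ring
  rw [ZMod.natCast_eq_zero_iff] at h0
  have := Nat.le_of_dvd (by omega) h0
  omega
end casts

section partner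
variable {p : ℕ} [hp : Fact p.Prime] (hodd : Odd p)

lemma exists_rep (hodd : Odd p) (c : ZMod p) (hc : c ≠ 0) :
    ∃ x ∈ Sset p, (x : ZMod p) = c ∨ (x : ZMod p) = -c := by
  have hp1 : 1 < p := hp.out.one_lt
  have hv : c.val < p := ZMod.val_lt c
  haveI : NeZero p := ⟨hp.out.ne_zero⟩
  have hcv : ((c.val : ℕ) : ZMod p) = c := by rw [ZMod.natCast_val, ZMod.cast_id]
  have hv0 : 0 < c.val := by
    rcases Nat.eq_zero_or_pos c.val with h | h
    · exact absurd (by rw [← hcv, h]; simp) hc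
    · exact h
  have h2v : 2 * c.val ≠ p := by
    have := Nat.odd_iff.mp hodd; omega
  by_cases h : 2 * c.val < p
  · refine ⟨c.val, ?_, Or.inl hcv⟩
    rw [Sset_eq_Ico, Finset.mem_Ico]; omega
  · refine ⟨p - c.val, ?_, Or.inr ?_⟩
    · rw [Sset_eq_Ico, Finset.mem_Ico]; omega
    · push_cast [Nat.cast_sub hv.le]
      simp [hcv]

lemma rep_unique {c : ZMod p} {x y : ℕ} (hx : x ∈ Sset p) (hy : y ∈ Sset p)
    (h1 : (x : ZMod p) = c ∨ (x : ZMod p) = -c)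
    (h2 : (y : ZMod p) = c ∨ (y : ZMod p) = -c) : x = y := by
  rcases h1 with h1 | h1 <;> rcases h2 with h2 | h2
  · exact Sset_cast_inj hx hy (h1.trans h2.symm)
  · exact absurd (h1.trans (by rw [h2]; ring_nf)) (fun h => Sset_cast_ne_neg hx hy h)
  · exact absurd (h2.trans (by rw [h1]; ring_nf)) (fun h => (Sset_cast_ne_neg hy hx h).elim)
  · exact Sset_cast_inj hx hy (by rw [h1, h2])

lemma partner_unique {k x y : ℕ} (hk : k ∈ Sset p) (hx : x ∈ Sset p) (hy : y ∈ Sset p)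
    (h1 : (k : ZMod p) * x = 1 ∨ (k : ZMod p) * x = -1)
    (h2 : (k : ZMod p) * y = 1 ∨ (k : ZMod p) * y = -1) : x = y := by
  have hk0 : (k : ZMod p) ≠ 0 := Sset_cast_ne_zero hk
  have key : ∀ z : ℕ, (k : ZMod p) * z = 1 ∨ (k : ZMod p) * z = -1 →
      (z : ZMod p) = (k : ZMod p)⁻¹ ∨ (z : ZMod p) = -(k : ZMod p)⁻¹ := by
    intro z hz
    rcases hz with hz | hz
    · left; field_simp at hz ⊢; linear_combination hz
    · right; field_simp at hz ⊢; linear_combination hz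
  exact rep_unique hx hy (key x h1) (key y h2)
end partner

open Equiv Equiv.Perm in
lemma sign_of_involutive' {α : Type*} [Fintype α] [DecidableEq α] :
    ∀ (n : ℕ) (σ : Equiv.Perm α), σ.support.card = n → (∀ x, σ (σ x) = x) →
      Equiv.Perm.sign σ = (-1) ^ (n / 2) := by
  intro n
  induction n using Nat.strong_induction_on with
  | _ n ih =>
    intro σ hcard hinv
    rcases Finset.eq_empty_or_nonempty σ.support with hs | ⟨x, hx⟩
    · have h1 : σ = 1 := by
        rwa [← Equiv.Perm.support_eq_empty_iff]
      rw [h1, ← hcard, hs]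
      simp
    · have hxne : σ x ≠ x := Equiv.Perm.mem_support.mp hx
      set σ' : Equiv.Perm α := σ * Equiv.swap x (σ x) with hσ'
      have hσ'app : ∀ y, σ' y = σ (Equiv.swap x (σ x) y) := fun y => rfl
      have h'x : σ' x = x := by rw [hσ'app, Equiv.swap_apply_left, hinv]
      have h'sx : σ' (σ x) = σ x := by rw [hσ'app, Equiv.swap_apply_right]
      have h'other : ∀ y, y ≠ x → y ≠ σ x → σ' y = σ y := by
        intro y h1 h2; rw [hσ'app, Equiv.swap_apply_of_ne_of_ne h1 h2]
      have h'inv : ∀ y, σ' (σ' y) = y := by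
        intro y
        by_cases h1 : y = x
        · rw [h1, h'x, h'x]
        by_cases h2 : y = σ x
        · rw [h2, h'sx, h'sx]
        · rw [h'other y h1 h2]
          have hy1 : σ y ≠ x := fun h => h2 (by rw [← hinv y, h])
          have hy2 : σ y ≠ σ x := fun h => h1 (σ.injective h)
          rw [h'other (σ y) hy1 hy2, hinv]
      have hsupp : σ'.support = σ.support \ {x, σ x} := by
        ext y
        simp only [Equiv.Perm.mem_support, Finset.mem_sdiff, Finset.mem_insert,
          Finset.mem_singleton]
        by_cases h1 : y = x
        · subst h1; simp [h'x]
        by_cases h2 : y = σ x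
        · subst h2; simp [h'sx]
        · rw [h'other y h1 h2]; tauto
      have hxmem : x ∈ σ.support := hx
      have hsxmem : σ x ∈ σ.support := by
        rw [Equiv.Perm.mem_support]
        intro h; exact hxne (by rw [← hinv x, h, h])
      have hcard' : σ'.support.card = n - 2 := by
        rw [hsupp, Finset.card_sdiff_of_subset]
        · rw [Finset.card_pair (Ne.symm hxne), hcard]
        · intro y hy
          simp only [Finset.mem_insert, Finset.mem_singleton] at hy
          rcases hy with rfl | rfl <;> assumption
      have hn2 : 2 ≤ n := by
        rw [← hcard]
        refine Finset.one_lt_card.mpr ⟨x, hxmem, σ x, hsxmem, Ne.symm hxne⟩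
      have ihs : Equiv.Perm.sign σ' = (-1) ^ ((n - 2) / 2) :=
        ih (n - 2) (by omega) σ' hcard' h'inv
      have : Equiv.Perm.sign σ' = Equiv.Perm.sign σ * (-1) := by
        rw [hσ', map_mul, Equiv.Perm.sign_swap (Ne.symm hxne)]
      have hsign : Equiv.Perm.sign σ = -Equiv.Perm.sign σ' := by
        rw [this, mul_neg_one, neg_neg]
      rw [hsign, ihs]
      have : n / 2 = (n - 2) / 2 + 1 := by omega
      rw [this, pow_succ, mul_neg_one]

/-- Let `p` be an odd prime and let `τ : S_p → S_p` send each `k` to the unique `k̃ ∈ S_p`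
with `k·k̃ ≡ ±1 (mod p)`.  Then `τ` is a permutation of `S_p` and its sign equals
`-(2/p)`, where `(2/p)` is the Legendre symbol. -/
theorem statement1 (p : ℕ) [hp : Fact p.Prime] (hodd : Odd p)
    (τ : Sset p → Sset p)
    (hτ : ∀ k : Sset p,
      ((k : ℕ) : ℤ) * ((τ k : ℕ) : ℤ) ≡ 1 [ZMOD p] ∨
      ((k : ℕ) : ℤ) * ((τ k : ℕ) : ℤ) ≡ -1 [ZMOD p]) :
    Function.Bijective τ ∧
      ∀ e : Equiv.Perm (Sset p), (∀ k, e k = τ k) →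
        (Equiv.Perm.sign e : ℤ) = -(legendreSym p 2) := by
  haveI : NeZero p := ⟨hp.out.ne_zero⟩
  have hp2 : p ≠ 2 := by rintro rfl; simp [Nat.odd_iff] at hodd
  have hp3 : 3 ≤ p := by
    have := hp.out.two_le; have := Nat.odd_iff.mp hodd; omega
  -- translate the hypothesis into `ZMod p`
  have hτ' : ∀ k : Sset p, ((k : ℕ) : ZMod p) * ((τ k : ℕ) : ZMod p) = 1 ∨
      ((k : ℕ) : ZMod p) * ((τ k : ℕ) : ZMod p) = -1 := by
    intro k
    rcases hτ k with h | h
    · left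
      have := (ZMod.intCast_eq_intCast_iff _ _ _).mpr h
      push_cast at this; exact this
    · right
      have := (ZMod.intCast_eq_intCast_iff _ _ _).mpr h
      push_cast at this; exact this
  -- τ is an involution
  have hτinv : ∀ k, τ (τ k) = k := by
    intro k
    have h1 := hτ' (τ k)
    have h2 : ((τ k : ℕ) : ZMod p) * ((k : ℕ) : ZMod p) = 1 ∨
        ((τ k : ℕ) : ZMod p) * ((k : ℕ) : ZMod p) = -1 := by
      rcases hτ' k with h | h
      · left; rw [mul_comm]; exact h
      · right; rw [mul_comm]; exact h
    exact Subtype.ext (partner_unique (τ k).2 (τ (τ k)).2 k.2 h1 h2)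
  have hbij : Function.Bijective τ := Function.Involutive.bijective hτinv
  refine ⟨hbij, ?_⟩
  intro e he
  -- e is an involution
  have heinv : ∀ k, e (e k) = k := by intro k; rw [he, he, hτinv]
  -- fixed point characterization
  have hfix : ∀ k : ↥(Sset p), e k = k ↔
      (((k : ℕ) : ZMod p) * ((k : ℕ) : ZMod p) = 1 ∨
       ((k : ℕ) : ZMod p) * ((k : ℕ) : ZMod p) = -1) := by
    intro k
    rw [he]
    constructor
    · intro h; rcases hτ' k with h' | h' <;> rw [h] at h' <;> [left; right] <;> exact h'
    · intro h
      exact Subtype.ext (partner_unique k.2 (τ k).2 k.2 (hτ' k) h)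
  -- the element 1 of Sset p
  have h1mem : (1 : ℕ) ∈ Sset p := mem_Sset.mpr ⟨le_refl 1, by omega, Nat.coprime_one_left p⟩
  set one : ↥(Sset p) := ⟨1, h1mem⟩ with hone
  have hone_fix : e one = one := by
    rw [hfix]; left; norm_num
  -- one is not -1 stuff
  have hne_neg_one : (1 : ZMod p) ≠ -1 := by
    intro h
    have h2 : ((2 : ℕ) : ZMod p) = 0 := by push_cast; linear_combination h
    rw [ZMod.natCast_eq_zero_iff] at h2
    have := Nat.le_of_dvd (by norm_num) h2
    omega
  classical
  set F : Finset ↥(Sset p) := Finset.univ.filter (fun k => e k = k) with hF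
  have hFle : F.card ≤ (p-1)/2 := by
    have h := Finset.card_le_card (Finset.subset_univ F)
    rwa [Finset.card_univ, Fintype.card_coe, card_Sset] at h
  have hsupp_card : e.support.card + F.card = (p-1)/2 := by
    have h1 : e.support = Finset.univ \ F := by
      ext k; simp [Equiv.Perm.mem_support, hF]
    rw [h1, Finset.card_sdiff_of_subset (Finset.subset_univ _), Finset.card_univ, Fintype.card_coe,
      card_Sset]
    omega
  have hsq_one : ∀ k : ↥(Sset p), ((k:ℕ):ZMod p) * ((k:ℕ):ZMod p) = 1 → k = one := by
    intro k hk
    have hfac : (((k:ℕ):ZMod p) - 1) * (((k:ℕ):ZMod p) + 1) = 0 := by linear_combination hk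
    rcases mul_eq_zero.mp hfac with h | h
    · exact Subtype.ext (Sset_cast_inj k.2 h1mem (by push_cast; linear_combination h))
    · exact absurd (show ((k:ℕ):ZMod p) = -((1:ℕ):ZMod p) by push_cast; linear_combination h)
        (fun hh => (Sset_cast_ne_neg k.2 h1mem hh).elim)
  have hFcard : F.card = (if p % 4 = 1 then 2 else 1) := by
    by_cases h4 : p % 4 = 1
    · rw [if_pos h4]
      obtain ⟨y, hy⟩ := ZMod.exists_sq_eq_neg_one_iff.mpr (by omega : p % 4 ≠ 3)
      have hy0 : y ≠ 0 := by
        intro h; rw [h, mul_zero] at hy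
        exact hne_neg_one (by linear_combination -2 * hy)
      obtain ⟨j, hjmem, hj⟩ := exists_rep hodd y hy0
      have hjsq : ((j:ℕ):ZMod p) * ((j:ℕ):ZMod p) = -1 := by
        rcases hj with h | h <;> rw [h] <;> linear_combination -hy
      set jj : ↥(Sset p) := ⟨j, hjmem⟩ with hjj
      have hjfix : e jj = jj := (hfix jj).mpr (Or.inr hjsq)
      have hjone : jj ≠ one := by
        intro h
        have hj1 : j = 1 := congrArg Subtype.val h
        rw [hj1] at hjsq
        push_cast at hjsq
        exact hne_neg_one (by linear_combination hjsq)
      have hFeq : F = {one, jj} := by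
        ext k
        simp only [hF, Finset.mem_filter, Finset.mem_univ, true_and, Finset.mem_insert,
          Finset.mem_singleton]
        constructor
        · intro hk
          rcases (hfix k).mp hk with h | h
          · left; exact hsq_one k h
          · right
            have hfac : (((k:ℕ):ZMod p) - ((j:ℕ):ZMod p)) *
                (((k:ℕ):ZMod p) + ((j:ℕ):ZMod p)) = 0 := by
              linear_combination h - hjsq
            rcases mul_eq_zero.mp hfac with hh | hh
            · exact Subtype.ext (Sset_cast_inj k.2 hjmem (by linear_combination hh))
            · exact absurd (show ((k:ℕ):ZMod p) = -((j:ℕ):ZMod p) by linear_combination hh)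
                (fun h2 => (Sset_cast_ne_neg k.2 hjmem h2).elim)
        · rintro (rfl | rfl)
          exacts [hone_fix, hjfix]
      rw [hFeq, Finset.card_insert_of_notMem (by simp [Ne.symm hjone]),
        Finset.card_singleton]
    · rw [if_neg h4]
      have h43 : p % 4 = 3 := by have := Nat.odd_iff.mp hodd; omega
      have hFeq : F = {one} := by
        ext k
        simp only [hF, Finset.mem_filter, Finset.mem_univ, true_and, Finset.mem_singleton]
        constructor
        · intro hk
          rcases (hfix k).mp hk with h | h
          · exact hsq_one k h
          · exact absurd (ZMod.exists_sq_eq_neg_one_iff.mp ⟨((k:ℕ):ZMod p), h.symm⟩)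
              (by omega)
        · rintro rfl; exact hone_fix
      rw [hFeq, Finset.card_singleton]
  have hsign : Equiv.Perm.sign e = (-1)^(e.support.card / 2) :=
    sign_of_involutive' _ e rfl heinv
  have hsignz : (Equiv.Perm.sign e : ℤ) = (-1:ℤ)^(e.support.card / 2) := by
    rw [hsign]; push_cast; ring
  have hleg : legendreSym p 2 = ZMod.χ₈ p := legendreSym.at_two hp2
  rw [hsignz, hleg, ZMod.χ₈_nat_eq_if_mod_eight]
  have hodd2 : p % 2 = 1 := Nat.odd_iff.mp hodd
  have hm8 : p % 8 = 1 ∨ p % 8 = 3 ∨ p % 8 = 5 ∨ p % 8 = 7 := by omega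
  rcases hm8 with h8 | h8 | h8 | h8
  · have hf : F.card = 2 := by rw [hFcard, if_pos (by omega)]
    have hm : Odd (e.support.card / 2) := Nat.odd_iff.mpr (by omega)
    rw [hm.neg_one_pow]
    simp [h8, hodd2]
  · have hf : F.card = 1 := by rw [hFcard, if_neg (by omega)]
    have hm : Even (e.support.card / 2) := Nat.even_iff.mpr (by omega)
    rw [hm.neg_one_pow]
    simp [h8, hodd2]
  · have hf : F.card = 2 := by rw [hFcard, if_pos (by omega)]
    have hm : Even (e.support.card / 2) := Nat.even_iff.mpr (by omega)
    rw [hm.neg_one_pow]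
    simp [h8, hodd2]
  · have hf : F.card = 1 := by rw [hFcard, if_neg (by omega)]
    have hm : Odd (e.support.card / 2) := Nat.odd_iff.mpr (by omega)
    rw [hm.neg_one_pow]
    simp [h8, hodd2]
end

section
/- Let p be a prime with p ≡ 3 (mod 4). For b ∈ S_p let b' ∈ S_p denote the unique element with b·b' ≡ ±1 (mod p). Then ∑_{a∈S_p} ∑_{b∈S_p} sec(2ab'π/p) = −(p−1)(p+1)/4 and ∑_{a∈S_p} ∑_{b∈S_p} (sec(2ab'π/p) − 1) = −(p−1)p/2. -/
open scoped Real
open Finset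

noncomputable def secF (p n : ℕ) : ℝ := (Real.cos (2 * n * π / p))⁻¹

lemma secF_zero (p : ℕ) : secF p 0 = 1 := by simp [secF]

lemma Sset_eq {p : ℕ} (hp : p.Prime) : Sset p = Finset.Ico 1 ((p + 1) / 2) := by
  have h2 := hp.two_le
  ext a
  simp only [Sset, Finset.mem_filter, Finset.mem_range, Finset.mem_Ico]
  constructor
  · rintro ⟨_, h1, hlt, _⟩; omega
  · rintro ⟨h1, hlt⟩
    have ha : a < p := by omega
    refine ⟨ha, h1, by omega, ?_⟩
    exact (Nat.coprime_comm.mp ((hp.coprime_iff_not_dvd).mpr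
      (fun hd => by have := Nat.le_of_dvd (by omega) hd; omega)))

lemma secF_mod {p : ℕ} (hp : p ≠ 0) (n : ℕ) : secF p n = secF p (n % p) := by
  have hpR : (p : ℝ) ≠ 0 := Nat.cast_ne_zero.mpr hp
  have hn : n % p + p * (n / p) = n := Nat.mod_add_div n p
  have hcast : (n : ℝ) = ((n % p : ℕ) : ℝ) + (p : ℝ) * ((n / p : ℕ) : ℝ) := by
    exact_mod_cast hn.symm
  have harg : 2 * (n : ℝ) * π / p = 2 * ((n % p : ℕ) : ℝ) * π / p + (n / p : ℕ) * (2 * π) := by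
    rw [hcast]; field_simp
  unfold secF
  rw [harg, (Real.cos_periodic.nat_mul (n / p)) _]

lemma secF_reflect {p : ℕ} (hp : p ≠ 0) (N m : ℕ) (h : m ≤ N * p) :
    secF p (N * p - m) = secF p m := by
  have hpR : (p : ℝ) ≠ 0 := Nat.cast_ne_zero.mpr hp
  have harg : 2 * ((N * p - m : ℕ) : ℝ) * π / p = N * (2 * π) - 2 * (m : ℝ) * π / p := by
    rw [Nat.cast_sub h]; push_cast; field_simp
  unfold secF
  rw [harg, Real.cos_nat_mul_two_pi_sub]

lemma sum_zmod_eq_range (p : ℕ) [NeZero p] (g : ZMod p → ℝ) :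
    ∑ x : ZMod p, g x = ∑ k ∈ range p, g k := by
  refine Finset.sum_nbij' (fun x => (ZMod.val x)) (fun k => (k : ZMod p)) ?_ ?_ ?_ ?_ ?_
  · intro x _; exact Finset.mem_range.mpr (ZMod.val_lt x)
  · intro k _; exact Finset.mem_univ _
  · intro x _; exact ZMod.natCast_rightInverse x
  · intro k hk; exact ZMod.val_cast_of_lt (Finset.mem_range.mp hk)
  · intro x _; rw [ZMod.natCast_rightInverse x]

lemma sum_range_mul_coprime {p : ℕ} (hp : p.Prime) {c : ℕ} (hc : Nat.Coprime c p) :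
    ∑ k ∈ range p, secF p (k * c) = ∑ k ∈ range p, secF p k := by
  haveI : NeZero p := ⟨hp.ne_zero⟩
  haveI : Fact p.Prime := ⟨hp⟩
  have hp0 : p ≠ 0 := hp.ne_zero
  have hc0 : (c : ZMod p) ≠ 0 := by
    rw [Ne, ZMod.natCast_eq_zero_iff]
    intro hd
    exact (Nat.Prime.coprime_iff_not_dvd hp).mp (Nat.coprime_comm.mp hc) hd
  have step1 : ∀ k : ℕ, secF p (k * c) = secF p (((k : ZMod p) * (c : ZMod p)).val) := by
    intro k
    rw [secF_mod hp0 (k * c)]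
    congr 1
    rw [← Nat.cast_mul, ZMod.val_natCast]
  calc ∑ k ∈ range p, secF p (k * c)
      = ∑ k ∈ range p, secF p (((k : ZMod p) * (c : ZMod p)).val) :=
        Finset.sum_congr rfl fun k _ => step1 k
    _ = ∑ x : ZMod p, secF p ((x * (c : ZMod p)).val) := by
        rw [sum_zmod_eq_range p (fun x => secF p ((x * (c : ZMod p)).val))]
    _ = ∑ x : ZMod p, secF p x.val :=
        Fintype.sum_equiv (Equiv.mulRight₀ (c : ZMod p) hc0) _ _ (fun x => rfl)
    _ = ∑ k ∈ range p, secF p k := by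
        rw [sum_zmod_eq_range p (fun x => secF p x.val)]
        exact Finset.sum_congr rfl fun k hk => by
          rw [ZMod.val_cast_of_lt (Finset.mem_range.mp hk)]

noncomputable def zet (p : ℕ) : ℂ := Complex.exp (2 * Real.pi * Complex.I / p)

lemma zet_pow_p {p : ℕ} (hp : p ≠ 0) : zet p ^ p = 1 := by
  have hpC : (p : ℂ) ≠ 0 := Nat.cast_ne_zero.mpr hp
  rw [zet, ← Complex.exp_nat_mul]
  have : (p : ℂ) * (2 * Real.pi * Complex.I / p) = 2 * Real.pi * Complex.I := by
    field_simp
  rw [this, Complex.exp_two_pi_mul_I]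

lemma zet_pow_eq_exp {p : ℕ} (hp : p ≠ 0) (s : ℕ) :
    zet p ^ s = Complex.exp ((2 * (s : ℝ) * Real.pi / p : ℝ) * Complex.I) := by
  have hpC : (p : ℂ) ≠ 0 := Nat.cast_ne_zero.mpr hp
  rw [zet, ← Complex.exp_nat_mul]
  congr 1
  push_cast
  field_simp

lemma sum_zet_pow {p : ℕ} (hp : p ≠ 0) (s : ℕ) :
    ∑ k ∈ range p, zet p ^ (k * s) = if p ∣ s then (p : ℂ) else 0 := by
  have hzp := zet_pow_p hp
  have hterm : ∀ k, zet p ^ (k * s) = (zet p ^ s) ^ k := fun k => by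
    rw [← pow_mul, mul_comm]
  simp_rw [hterm]
  by_cases hd : p ∣ s
  · obtain ⟨t, rfl⟩ := hd
    have : zet p ^ (p * t) = 1 := by rw [pow_mul, hzp, one_pow]
    simp [this, if_pos]
  · rw [if_neg hd]
    have hne : zet p ^ s ≠ 1 := by
      intro h1
      rw [zet_pow_eq_exp hp, Complex.exp_eq_one_iff] at h1
      obtain ⟨n, hn⟩ := h1
      have hpC : (p : ℂ) ≠ 0 := Nat.cast_ne_zero.mpr hp
      have hfac : (2 : ℂ) * (Real.pi : ℂ) * Complex.I ≠ 0 := by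
        simp [Real.pi_ne_zero, Complex.I_ne_zero]
      push_cast at hn
      have h1' : (2 : ℂ) * (Real.pi : ℂ) * Complex.I * (s : ℂ)
          = 2 * (Real.pi : ℂ) * Complex.I * ((n : ℂ) * (p : ℂ)) := by
        field_simp at hn
        linear_combination (2 * (Real.pi : ℂ) * Complex.I) * hn
      have h2' : (s : ℂ) = (n : ℂ) * (p : ℂ) := mul_left_cancel₀ hfac h1'
      have hsz : (s : ℤ) = n * p := by exact_mod_cast h2'
      exact hd (Int.natCast_dvd_natCast.mp ⟨n, by rw [hsz]; ring⟩)
    rw [geom_sum_eq hne]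
    have : (zet p ^ s) ^ p = 1 := by
      rw [← pow_mul, mul_comm, pow_mul, hzp, one_pow]
    rw [this, sub_self, zero_div]

lemma one_add_ne {p : ℕ} (hodd : Odd p) {z : ℂ} (hz : z ^ p = 1) : 1 + z ≠ 0 := by
  intro h
  have hz1 : z = -1 := by linear_combination h
  rw [hz1, hodd.neg_one_pow] at hz
  norm_num at hz

lemma inv_one_add {p : ℕ} (hodd : Odd p) {z : ℂ} (hz : z ^ p = 1) :
    (1 + z)⁻¹ = (∑ i ∈ range p, (-z) ^ i) / 2 := by
  have hne := one_add_ne hodd hz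
  have hmul : (∑ i ∈ range p, (-z) ^ i) * (1 + z) = 2 := by
    have h := geom_sum_mul (-z) p
    have hnp : (-z) ^ p = -1 := by rw [hodd.neg_pow, hz]
    rw [hnp] at h
    linear_combination -h
  field_simp
  linear_combination -hmul

lemma sec_eq (θ : ℝ) (h : 1 + Complex.exp (2 * θ * Complex.I) ≠ 0) :
    ((Real.cos θ)⁻¹ : ℂ) = 2 * Complex.exp ((θ : ℝ) * Complex.I) * (1 + Complex.exp (2 * θ * Complex.I))⁻¹ := by
  have h2 : Complex.exp (2 * (θ : ℂ) * Complex.I)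
      = Complex.exp ((θ : ℂ) * Complex.I) ^ 2 := by
    rw [sq, ← Complex.exp_add]; ring_nf
  rw [Complex.ofReal_cos, h2]
  set e := Complex.exp ((θ : ℂ) * Complex.I) with hedef
  have he : e ≠ 0 := Complex.exp_ne_zero _
  have hh2 : 1 + e ^ 2 ≠ 0 := by rw [← h2]; exact h
  have hcos : Complex.cos (θ : ℂ) = (e + e⁻¹) / 2 := by
    rw [show Complex.cos (θ : ℂ)
      = (Complex.exp ((θ:ℂ) * Complex.I) + Complex.exp (-(θ:ℂ) * Complex.I)) / 2 from rfl]
    rw [neg_mul, Complex.exp_neg]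
  rw [hcos]
  refine inv_eq_of_mul_eq_one_right ?_
  have h3 : (e + e⁻¹) * e = 1 + e ^ 2 := by
    rw [add_mul, inv_mul_cancel₀ he]; ring
  calc (e + e⁻¹) / 2 * (2 * e * (1 + e ^ 2)⁻¹)
      = ((e + e⁻¹) * e) * (1 + e ^ 2)⁻¹ := by ring
    _ = (1 + e ^ 2) * (1 + e ^ 2)⁻¹ := by rw [h3]
    _ = 1 := mul_inv_cancel₀ hh2

lemma core {p : ℕ} (hp : p.Prime) (h3 : p % 4 = 3) :
    ∑ k ∈ range p, secF p k = -(p : ℝ) := by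
  have hp0 : p ≠ 0 := hp.ne_zero
  have hp2 := hp.two_le
  have hodd : Odd p := by rw [Nat.odd_iff]; omega
  set m := (p + 1) / 2 with hm
  have hm2 : 2 * m = p + 1 := by omega
  have hmcop : Nat.Coprime m p :=
    Nat.coprime_comm.mp ((hp.coprime_iff_not_dvd).mpr
      (fun hd => by have := Nat.le_of_dvd (by omega) hd; omega))
  rw [← sum_range_mul_coprime hp hmcop]
  have hzp := zet_pow_p hp0
  have hzkp : ∀ k : ℕ, (zet p ^ k) ^ p = 1 := fun k => by
    rw [← pow_mul, mul_comm, pow_mul, hzp, one_pow]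
  have hne : ∀ k : ℕ, 1 + zet p ^ k ≠ 0 := fun k => one_add_ne hodd (hzkp k)
  have key : ((∑ k ∈ range p, secF p (k * m) : ℝ) : ℂ) = -(p : ℂ) := by
    rw [Complex.ofReal_sum]
    have hterm : ∀ k ∈ range p, ((secF p (k * m) : ℝ) : ℂ)
        = ∑ i ∈ range p, (-1 : ℂ) ^ i * zet p ^ (k * (m + i)) := by
      intro k _
      set θ : ℝ := 2 * ((k * m : ℕ) : ℝ) * π / p with hθdef
      have hexp1 : Complex.exp ((θ : ℂ) * Complex.I) = zet p ^ (k * m) := by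
        rw [zet_pow_eq_exp hp0 (k * m)]
      have hpow : zet p ^ (2 * (k * m)) = zet p ^ k := by
        have h1 : 2 * (k * m) = k * p + k := by
          calc 2 * (k * m) = k * (2 * m) := by ring
            _ = k * (p + 1) := by rw [hm2]
            _ = k * p + k := by ring
        rw [h1, pow_add, pow_mul, hzkp k, one_mul]
      have hexp2 : Complex.exp (2 * (θ : ℂ) * Complex.I) = zet p ^ k := by
        rw [← hpow, zet_pow_eq_exp hp0 (2 * (k * m))]
        congr 1
        rw [hθdef]
        push_cast
        ring
      have hsec := sec_eq θ (by rw [hexp2]; exact hne k)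
      rw [hexp1, hexp2] at hsec
      have hstep : ((secF p (k * m) : ℝ) : ℂ) = 2 * zet p ^ (k * m) * (1 + zet p ^ k)⁻¹ := by
        rw [secF, Complex.ofReal_inv]
        exact hsec
      rw [hstep, inv_one_add hodd (hzkp k)]
      have hterm2 : ∀ i ∈ range p, (-1 : ℂ) ^ i * zet p ^ (k * (m + i))
          = zet p ^ (k * m) * (-(zet p ^ k)) ^ i := by
        intro i _
        have hng : (-(zet p ^ k)) ^ i = (-1 : ℂ) ^ i * zet p ^ (k * i) := by
          rw [neg_pow, pow_mul]
        rw [hng, Nat.mul_add, pow_add]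
        ring
      rw [Finset.sum_congr rfl hterm2, ← Finset.mul_sum]
      ring
    rw [Finset.sum_congr rfl hterm, Finset.sum_comm]
    have hin : ∀ i ∈ range p, (∑ k ∈ range p, (-1 : ℂ) ^ i * zet p ^ (k * (m + i)))
        = (-1 : ℂ) ^ i * (if p ∣ (m + i) then (p : ℂ) else 0) := by
      intro i _
      rw [← Finset.mul_sum, sum_zet_pow hp0 (m + i)]
    rw [Finset.sum_congr rfl hin]
    have hmem : p - m ∈ range p := by
      simp only [Finset.mem_range]; omega
    rw [Finset.sum_eq_single_of_mem (p - m) hmem ?_]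
    · have hmp : m + (p - m) = p := by omega
      have hoddpm : Odd (p - m) := by rw [Nat.odd_iff]; omega
      rw [hmp, if_pos dvd_rfl, hoddpm.neg_one_pow]
      ring
    · intro i hi hne'
      have hnd : ¬ p ∣ (m + i) := by
        intro hd
        rcases hd with ⟨t, ht⟩
        have hi' : i < p := Finset.mem_range.mp hi
        have ht1 : t = 1 := by
          rcases Nat.lt_or_ge t 1 with h | h
          · interval_cases t; omega
          rcases Nat.lt_or_ge t 2 with h' | h'
          · omega
          · have h2p : p * 2 ≤ p * t := Nat.mul_le_mul_left p h'
            omega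
        rw [ht1, mul_one] at ht
        omega
      rw [if_neg hnd, mul_zero]
  have key2 : ((∑ k ∈ range p, secF p (k * m) : ℝ) : ℂ) = ((-(p : ℝ) : ℝ) : ℂ) := by
    rw [key]; push_cast; ring
  exact_mod_cast key2

lemma fold {p : ℕ} (hp : p.Prime) (h2 : p % 2 = 1) (c : ℕ) :
    ∑ k ∈ range p, secF p (k * c) = 1 + 2 * ∑ a ∈ Sset p, secF p (a * c) := by
  have hp0 : p ≠ 0 := hp.ne_zero
  have hp2 := hp.two_le
  set m := (p + 1) / 2 with hm
  have hS : Sset p = Finset.Ico 1 m := Sset_eq hp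
  have hr : range p = insert 0 (Finset.Ico 1 p) := by
    ext x
    simp only [Finset.mem_range, Finset.mem_insert, Finset.mem_Ico]
    omega
  rw [hr, Finset.sum_insert (by simp)]
  have h0 : secF p (0 * c) = 1 := by rw [Nat.zero_mul, secF_zero]
  rw [h0]
  have h1m : 1 ≤ m := by omega
  have hmp : m ≤ p := by omega
  rw [← Finset.sum_Ico_consecutive (fun k => secF p (k * c)) h1m hmp]
  have hsecond : ∑ k ∈ Finset.Ico m p, secF p (k * c) = ∑ a ∈ Finset.Ico 1 m, secF p (a * c) := by
    refine Finset.sum_nbij' (fun k => p - k) (fun a => p - a) ?_ ?_ ?_ ?_ ?_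
    · intro k hk; simp only [Finset.mem_Ico] at *; omega
    · intro a ha; simp only [Finset.mem_Ico] at *; omega
    · intro k hk; simp only [Finset.mem_Ico] at hk; show p - (p - k) = k; omega
    · intro a ha; simp only [Finset.mem_Ico] at ha; show p - (p - a) = a; omega
    · intro k hk
      simp only [Finset.mem_Ico] at hk
      have hkc : k * c ≤ c * p := by
        have : k ≤ p := by omega
        calc k * c ≤ p * c := Nat.mul_le_mul_right c this
          _ = c * p := by ring
      have : (p - k) * c = c * p - k * c := by
        rw [Nat.sub_mul]; ring_nf
      rw [this, secF_reflect hp0 c (k * c) hkc]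
  rw [hsecond, hS]
  ring

lemma sum_S {p : ℕ} (hp : p.Prime) (h3 : p % 4 = 3) {c : ℕ} (hc : Nat.Coprime c p) :
    ∑ a ∈ Sset p, secF p (a * c) = (-(p : ℝ) - 1) / 2 := by
  have h2 : p % 2 = 1 := by omega
  have hfold := fold hp h2 c
  rw [sum_range_mul_coprime hp hc, core hp h3] at hfold
  linarith

/-- Let `p` be a prime with `p ≡ 3 (mod 4)`. For `b ∈ S_p` let `σ b ∈ S_p` be the unique
element with `b·σ(b) ≡ ±1 (mod p)`. Then
`∑_{a ∈ S_p} ∑_{b ∈ S_p} sec(2aσ(b)π/p) = -(p-1)(p+1)/4` and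
`∑_{a ∈ S_p} ∑_{b ∈ S_p} (sec(2aσ(b)π/p) - 1) = -(p-1)p/2`. -/
theorem statement14 (p : ℕ) (hp : p.Prime) (h3 : p % 4 = 3)
    (σ : Sset p → Sset p)
    (hσ : ∀ b : Sset p,
      ((b : ℕ) : ℤ) * ((σ b : ℕ) : ℤ) ≡ 1 [ZMOD p] ∨
      ((b : ℕ) : ℤ) * ((σ b : ℕ) : ℤ) ≡ -1 [ZMOD p]) :
    (∑ a : Sset p, ∑ b : Sset p,
        (Real.cos (2 * (a : ℕ) * (σ b : ℕ) * π / p))⁻¹ =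
      -(((p : ℝ) - 1) * ((p : ℝ) + 1)) / 4) ∧
    (∑ a : Sset p, ∑ b : Sset p,
        ((Real.cos (2 * (a : ℕ) * (σ b : ℕ) * π / p))⁻¹ - 1) =
      -(((p : ℝ) - 1) * (p : ℝ)) / 2) := by
  have hp0 : p ≠ 0 := hp.ne_zero
  have hp2 := hp.two_le
  set K := (p - 1) / 2 with hK
  have hpK : p = 2 * K + 1 := by omega
  have hcard : (Sset p).card = K := by
    rw [Sset_eq hp, Nat.card_Ico]; omega
  have hcast : (p : ℝ) = 2 * (K : ℝ) + 1 := by exact_mod_cast congrArg (Nat.cast (R := ℝ)) hpK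
  have hinner : ∀ b : (Sset p : Finset ℕ),
      (∑ a : (Sset p : Finset ℕ),
        (Real.cos (2 * ((a : ℕ) : ℝ) * (((σ b : ℕ) : ℕ) : ℝ) * π / p))⁻¹)
        = (-(p : ℝ) - 1) / 2 := by
    intro b
    have hb := (σ b).2
    simp only [Sset, Finset.mem_filter] at hb
    have hc : Nat.Coprime ((σ b : ℕ)) p := hb.2.2.2
    have hterm : ∀ a : ℕ,
        ((Real.cos (2 * (a : ℝ) * (((σ b : ℕ) : ℕ) : ℝ) * π / p))⁻¹ : ℝ)
          = secF p (a * (σ b : ℕ)) := by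
      intro a
      have harg : (2 * (a : ℝ) * (((σ b : ℕ) : ℕ) : ℝ) * π / p)
          = 2 * ((a * (σ b : ℕ) : ℕ) : ℝ) * π / p := by push_cast; ring
      rw [secF, ← harg]
    calc ∑ a : (Sset p : Finset ℕ),
          (Real.cos (2 * ((a : ℕ) : ℝ) * (((σ b : ℕ) : ℕ) : ℝ) * π / p))⁻¹
        = ∑ a : (Sset p : Finset ℕ), secF p ((a : ℕ) * (σ b : ℕ)) :=
          Finset.sum_congr rfl fun a _ => hterm a
      _ = ∑ a ∈ Sset p, secF p (a * (σ b : ℕ)) :=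
          Finset.sum_coe_sort (Sset p) (fun a => secF p (a * (σ b : ℕ)))
      _ = (-(p : ℝ) - 1) / 2 := sum_S hp h3 hc
  constructor
  · rw [Finset.sum_comm]
    calc ∑ b : (Sset p : Finset ℕ), ∑ a : (Sset p : Finset ℕ),
          (Real.cos (2 * ((a : ℕ) : ℝ) * (((σ b : ℕ) : ℕ) : ℝ) * π / p))⁻¹
        = ∑ _b : (Sset p : Finset ℕ), (-(p : ℝ) - 1) / 2 :=
          Finset.sum_congr rfl fun b _ => hinner b
      _ = (K : ℝ) * ((-(p : ℝ) - 1) / 2) := by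
          rw [Finset.sum_const, Finset.card_univ, Fintype.card_coe, hcard, nsmul_eq_mul]
      _ = -(((p : ℝ) - 1) * ((p : ℝ) + 1)) / 4 := by rw [hcast]; ring
  · rw [Finset.sum_comm]
    calc ∑ b : (Sset p : Finset ℕ), ∑ a : (Sset p : Finset ℕ),
          ((Real.cos (2 * ((a : ℕ) : ℝ) * (((σ b : ℕ) : ℕ) : ℝ) * π / p))⁻¹ - 1)
        = ∑ _b : (Sset p : Finset ℕ), ((-(p : ℝ) - 1) / 2 - (K : ℝ)) := by
          refine Finset.sum_congr rfl fun b _ => ?_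
          rw [Finset.sum_sub_distrib, hinner b, Finset.sum_const, Finset.card_univ,
            Fintype.card_coe, hcard, nsmul_eq_mul, mul_one]
      _ = (K : ℝ) * ((-(p : ℝ) - 1) / 2 - (K : ℝ)) := by
          rw [Finset.sum_const, Finset.card_univ, Fintype.card_coe, hcard, nsmul_eq_mul]
      _ = -(((p : ℝ) - 1) * (p : ℝ)) / 2 := by rw [hcast]; ring
end
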